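/- Let X, Y be subsets of the positive integers and n ≥ 1 an integer with n+1 ∈ Y − X. Then for all k ≥ 0, A_{n+1,k}^{X,Y} = (x_n − (k−1)) · A_{n,k−1}^{X,Y} + (n+1 − (x_n − k)) · A_{n,k}^{X,Y}, where the term with A_{n,k−1}^{X,Y} is omitted when k = 0. -/

import Mathlib

/-!
Every permutation of `[n+1]` arises exactly once by inserting the letter `n+1` into a permutation
`σ` of `[n]` at one of `n+1` positions. As `n+1 ∉ X`, the new letter starts no adjacency; as
`n+1 ∈ Y`, it ends one exactly when the letter before it lies in `X`, and in that case the
insertion destroys the adjacency that letter may have started. So the count rises by one at the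
`x_n - adj(σ)` positions following a letter of `X` that starts no adjacency, and is unchanged at
the other `n + 1 - (x_n - adj(σ))` positions; summing over `σ` gives the recurrence.
-/

/-- `cnt X n` is `|X ∩ [n]|` where `[n] = {1, ..., n}`. -/
noncomputable def cnt (X : Set ℕ) (n : ℕ) : ℕ := (X ∩ Set.Icc 1 n).ncard

/-- `adj_{X,Y}(σ)`: number of `i` with `σ_i ∈ X` and `σ_{i+1} ∈ Y`
(positions and values of `Fin n` are identified with `{1, ..., n}` via `i ↦ i + 1`). -/
noncomputable def adjCount (X Y : Set ℕ) (n : ℕ) (σ : Equiv.Perm (Fin n)) : ℕ :=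
  {i : Fin n | ∃ h : (i : ℕ) + 1 < n,
    ((σ i : ℕ) + 1) ∈ X ∧ ((σ ⟨(i : ℕ) + 1, h⟩ : ℕ) + 1) ∈ Y}.ncard

/-- `A_{n,s}^{X,Y}`: the number of permutations of `[n]` with exactly `s`
`(X,Y)`-adjacencies. -/
noncomputable def A (X Y : Set ℕ) (n s : ℕ) : ℕ :=
  Nat.card {σ : Equiv.Perm (Fin n) | adjCount X Y n σ = s}

open Finset

section

open Classical

variable {X Y : Set ℕ}

def IsAdj (X Y : Set ℕ) {m : ℕ} (σ : Equiv.Perm (Fin m)) (i : Fin m) : Prop :=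
  ∃ h : (i : ℕ) + 1 < m, ((σ i : ℕ) + 1) ∈ X ∧ ((σ ⟨(i : ℕ) + 1, h⟩ : ℕ) + 1) ∈ Y

lemma adjCount_eq_sum {m : ℕ} (σ : Equiv.Perm (Fin m)) :
    adjCount X Y m σ = ∑ i, if IsAdj X Y σ i then 1 else 0 := by
  rw [adjCount, Set.ncard_eq_toFinset_card', sum_boole, Nat.cast_id]
  congr 1
  ext i
  simp [IsAdj]

lemma IsAdj.mem_left {m : ℕ} {σ : Equiv.Perm (Fin m)} {i : Fin m} (h : IsAdj X Y σ i) :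
    ((σ i : ℕ) + 1) ∈ X :=
  h.elim fun _ hxy => hxy.1

lemma A_eq_sum {R : Type*} [CommSemiring R] (m s : ℕ) :
    (A X Y m s : R) = ∑ σ : Equiv.Perm (Fin m), if adjCount X Y m σ = s then 1 else 0 := by
  rw [A, Nat.card_coe_set_eq, Set.ncard_eq_toFinset_card', ← natCast_card_filter]
  congr 3
  ext σ
  simp

lemma card_filter_perm_add_one_mem (n : ℕ) (σ : Equiv.Perm (Fin n)) :
    #{j | ((σ j : ℕ) + 1) ∈ X} = cnt X n := by
  rw [cnt, ← Set.ncard_coe_finset]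
  refine Set.ncard_congr (fun j _ => (σ j : ℕ) + 1) (fun j hj => ?_) (fun a b _ _ hab => ?_)
    (fun x ⟨hx, hx1, hxn⟩ => ⟨σ.symm ⟨x - 1, by omega⟩, ?_, ?_⟩)
  · simp only [coe_filter, mem_univ, true_and, Set.mem_ofPred_eq] at hj
    exact ⟨hj, by omega, (σ j).isLt⟩
  · simpa [Fin.val_inj] using hab
  · simpa [Nat.sub_add_cancel hx1] using hx
  · simp; omega

/-- Inserts the letter `n+1` into `σ` at position `p`. -/
def insertMax {n : ℕ} (σ : Equiv.Perm (Fin n)) (p : Fin (n + 1)) : Equiv.Perm (Fin (n + 1)) :=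
  (finSuccEquiv' p).trans (σ.optionCongr.trans (finSuccEquiv' (Fin.last n)).symm)

variable {n : ℕ} (σ : Equiv.Perm (Fin n)) (p : Fin (n + 1))

@[simp]
lemma insertMax_apply_self : insertMax σ p p = Fin.last n := by
  simp [insertMax]

@[simp]
lemma insertMax_apply_succAbove (i : Fin n) : insertMax σ p (p.succAbove i) = (σ i).castSucc := by
  simp [insertMax, ← Fin.succAbove_last]

lemma insertMax_injective : Function.Injective fun q : Equiv.Perm (Fin n) × Fin (n + 1) =>
    insertMax q.1 q.2 := by
  rintro ⟨σ, p⟩ ⟨σ', p'⟩ h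
  simp only at h
  obtain rfl : p = p' :=
    (insertMax σ' p').injective <| by rw [insertMax_apply_self, ← h, insertMax_apply_self]
  have : σ = σ' := by
    ext j
    simpa using congrArg Fin.val (congrFun (congrArg DFunLike.coe h) (p.succAbove j))
  rw [this]

noncomputable def insertMaxEquiv (n : ℕ) :
    Equiv.Perm (Fin n) × Fin (n + 1) ≃ Equiv.Perm (Fin (n + 1)) :=
  Equiv.ofBijective _ <| (Fintype.bijective_iff_injective_and_card _).mpr
    ⟨insertMax_injective, by simp [Fintype.card_perm, Nat.factorial_succ, Nat.mul_comm]⟩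

lemma val_succAbove_add_one_lt_iff {i : Fin n} (hp : p ≠ i.succ) :
    (p.succAbove i : ℕ) + 1 < n + 1 ↔ (i : ℕ) + 1 < n := by
  have := Fin.val_ne_of_ne hp
  rcases lt_or_ge i.castSucc p with h | h <;>
    simp_all [Fin.succAbove_of_castSucc_lt, Fin.succAbove_of_le_castSucc, Fin.lt_def, Fin.le_def]
  all_goals omega

lemma val_succAbove_add_one {i : Fin n} (hp : p ≠ i.succ) (h : (i : ℕ) + 1 < n) :
    (p.succAbove i : ℕ) + 1 = p.succAbove ⟨i + 1, h⟩ := by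
  have := Fin.val_ne_of_ne hp
  rcases lt_or_ge i.castSucc p with hi | hi
  · rw [Fin.succAbove_of_castSucc_lt _ _ hi, Fin.succAbove_of_castSucc_lt]
    · simp
    · simp_all [Fin.lt_def]; omega
  · rw [Fin.succAbove_of_le_castSucc _ _ hi, Fin.succAbove_of_le_castSucc]
    · simp
    · simp_all [Fin.le_def]; omega

lemma isAdj_insertMax_self (hX : n + 1 ∉ X) : ¬ IsAdj X Y (insertMax σ p) p :=
  fun h => hX (by simpa using h.mem_left)

lemma isAdj_insertMax_succ_castSucc (hY : n + 1 ∈ Y) (j : Fin n) :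
    IsAdj X Y (insertMax σ j.succ) j.castSucc ↔ ((σ j : ℕ) + 1) ∈ X := by
  have hnext : ∀ h, (⟨(j : ℕ) + 1, h⟩ : Fin (n + 1)) = j.succ := fun _ => rfl
  rw [IsAdj, ← Fin.succAbove_succ_self j, insertMax_apply_succAbove, Fin.succAbove_succ_self]
  simp only [Fin.val_castSucc, hnext, insertMax_apply_self, Fin.val_last]
  exact ⟨fun ⟨_, hx, _⟩ => hx, fun hx => ⟨by omega, hx, hY⟩⟩

lemma isAdj_insertMax_succAbove {i : Fin n} (hp : p ≠ i.succ) :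
    IsAdj X Y (insertMax σ p) (p.succAbove i) ↔ IsAdj X Y σ i := by
  have hnext (h' : (i : ℕ) + 1 < n) (h) :
      (⟨p.succAbove i + 1, h⟩ : Fin (n + 1)) = p.succAbove ⟨i + 1, h'⟩ :=
    Fin.ext (val_succAbove_add_one p hp h')
  have hlt := val_succAbove_add_one_lt_iff p hp
  constructor
  · rintro ⟨h, hx, hy⟩
    exact ⟨hlt.mp h, by simpa using hx, by simpa [hnext (hlt.mp h)] using hy⟩
  · rintro ⟨h, hx, hy⟩
    exact ⟨hlt.mpr h, by simpa using hx, by simpa [hnext h] using hy⟩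

noncomputable def gainSlots (X Y : Set ℕ) {n : ℕ} (σ : Equiv.Perm (Fin n)) : Finset (Fin (n + 1)) :=
  ({j | ((σ j : ℕ) + 1) ∈ X ∧ ¬ IsAdj X Y σ j} : Finset (Fin n)).map (Fin.succEmb n)

lemma card_gainSlots : (#(gainSlots X Y σ) : ℤ) = cnt X n - adjCount X Y n σ := by
  have hsplit := card_filter_add_card_filter_not
    (s := ({j | ((σ j : ℕ) + 1) ∈ X} : Finset (Fin n))) (p := IsAdj X Y σ)
  rw [filter_filter, filter_filter,
    filter_congr fun j _ => and_iff_right_of_imp IsAdj.mem_left] at hsplit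
  rw [gainSlots, card_map, ← card_filter_perm_add_one_mem n σ, ← hsplit, adjCount_eq_sum, sum_boole]
  push_cast
  ring

lemma adjCount_insertMax (hX : n + 1 ∉ X) (hY : n + 1 ∈ Y) :
    adjCount X Y (n + 1) (insertMax σ p) =
      adjCount X Y n σ + if p ∈ gainSlots X Y σ then 1 else 0 := by
  rw [adjCount_eq_sum, Fin.sum_univ_succAbove _ p, if_neg (isAdj_insertMax_self σ p hX), zero_add,
    adjCount_eq_sum]
  cases p using Fin.cases with
  | zero =>
    have h0 : 0 ∉ gainSlots X Y σ := by simp [gainSlots]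
    rw [if_neg h0, add_zero]
    exact sum_congr rfl fun i _ => by rw [isAdj_insertMax_succAbove σ 0 (Fin.succ_ne_zero i).symm]
  | succ j =>
    have hmem : j.succ ∈ gainSlots X Y σ ↔ ((σ j : ℕ) + 1) ∈ X ∧ ¬ IsAdj X Y σ j := by
      simp [gainSlots]
    rw [← add_sum_erase _ _ (mem_univ j), ← add_sum_erase _ _ (mem_univ j),
      sum_congr rfl fun i hi => by
        rw [isAdj_insertMax_succAbove σ _ (Fin.succ_injective _ |>.ne (ne_of_mem_erase hi).symm)],
      Fin.succAbove_succ_self, isAdj_insertMax_succ_castSucc σ hY]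
    have := @IsAdj.mem_left X Y _ σ j
    simp only [hmem]
    split_ifs <;> first | omega | tauto

end

lemma sum_boole_add_ite_mem_eq {α : Type*} [Fintype α] [DecidableEq α] (G : Finset α)
    (a k : ℕ) :
    ∑ p : α, (if a + (if p ∈ G then 1 else 0) = k then (1 : ℤ) else 0) =
      (if a + 1 = k then (#G : ℤ) else 0) +
        (if a = k then (Fintype.card α : ℤ) - #G else 0) := by
  rw [sum_boole]
  by_cases h1 : a + 1 = k
  · subst h1
    rw [if_pos rfl, if_neg (by omega), add_zero,
      filter_congr fun p _ => show _ ↔ p ∈ G by split_ifs <;> simp [*]]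
    simp
  by_cases h0 : a = k
  · rw [if_neg h1, if_pos h0, zero_add,
      filter_congr fun p _ => show _ ↔ p ∉ G by split_ifs <;> simp [*],
      filter_not, ← compl_eq_univ_sdiff, card_compl]
    simp [Nat.cast_sub (card_le_univ G)]
  · rw [if_neg h1, if_neg h0, add_zero, filter_false_of_mem fun p _ => by split_ifs <;> omega]
    simp

lemma sum_ite_adjCount_eq (X Y : Set ℕ) (n s : ℕ) (f : ℕ → ℤ) :
    ∑ σ : Equiv.Perm (Fin n), (if adjCount X Y n σ = s then f (adjCount X Y n σ) else 0) =
      f s * A X Y n s := by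
  rw [A_eq_sum, mul_sum]
  exact sum_congr rfl fun σ _ => by split_ifs with h <;> simp [h]

lemma sum_ite_adjCount_add_one_eq (X Y : Set ℕ) (n k : ℕ) (f : ℕ → ℤ) :
    ∑ σ : Equiv.Perm (Fin n), (if adjCount X Y n σ + 1 = k then f (adjCount X Y n σ) else 0) =
      if k = 0 then 0 else f (k - 1) * A X Y n (k - 1) := by
  rcases k with _ | k
  · simp
  · simpa using sum_ite_adjCount_eq X Y n k f

theorem A_rec_case4_general (X Y : Set ℕ) (n : ℕ) (h : n + 1 ∈ Y \ X) (k : ℕ) :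
    (A X Y (n + 1) k : ℤ) =
      (if k = 0 then 0 else
        ((cnt X n : ℤ) - ((k : ℤ) - 1)) * (A X Y n (k - 1) : ℤ)) +
        ((n : ℤ) + 1 - ((cnt X n : ℤ) - (k : ℤ))) * (A X Y n k : ℤ) := by
  obtain ⟨hY, hX⟩ := h
  rw [A_eq_sum, ← (insertMaxEquiv n).sum_comp, Fintype.sum_prod_type]
  simp only [insertMaxEquiv, Equiv.ofBijective_apply, adjCount_insertMax _ _ hX hY,
    sum_boole_add_ite_mem_eq, card_gainSlots, Fintype.card_fin, Nat.cast_add, Nat.cast_one,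
    sum_add_distrib]
  rw [sum_ite_adjCount_add_one_eq X Y n k fun a => cnt X n - a,
    sum_ite_adjCount_eq X Y n k fun a => n + 1 - (cnt X n - a)]
  split_ifs with hk
  · simp
  · rw [Nat.cast_sub (Nat.one_le_iff_ne_zero.mpr hk)]
    push_cast
    ring

/-- Recurrence for `A_{n,k}^{X,Y}` when `n+1 ∈ Y - X`:
`A_{n+1,k} = (x_n - (k-1)) A_{n,k-1} + (n+1 - (x_n - k)) A_{n,k}`,
the first term being omitted when `k = 0`. -/
theorem A_rec_case4 (X Y : Set ℕ) (hX : 0 ∉ X) (hY : 0 ∉ Y) (n : ℕ) (hn : 1 ≤ n)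
    (h : n + 1 ∈ Y \ X) (k : ℕ) :
    (A X Y (n + 1) k : ℤ) =
      (if k = 0 then 0 else
        ((cnt X n : ℤ) - ((k : ℤ) - 1)) * (A X Y n (k - 1) : ℤ)) +
        ((n : ℤ) + 1 - ((cnt X n : ℤ) - (k : ℤ))) * (A X Y n k : ℤ) :=
  A_rec_case4_general X Y n h k
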